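/- Let R = k[x_0, x_1, x_2] and I = l·H where l is a linear form and H is an ideal generated by a regular sequence of 3 forms each of degree d_1 − 1 (with d_1 ≥ 2). Then reg(R/I) = 3d_1 − 5. -/

import Mathlib

/-!
STATEMENT 0: If `I` is a homogeneous ideal in `R = k[x₀,…,xₙ]` generated by a regular
sequence of homogeneous forms of degrees `d₁,…,d_r`, then the Castelnuovo–Mumford
regularity of `R/I` equals `(d₁-1)+⋯+(d_r-1)`.

We define the Castelnuovo–Mumford regularity of `R/I` via graded free resolutions:
`reg (R/I) ≤ m` iff there is a graded free resolution `⋯ → ⊕ R(-d_{i,j}) → ⋯ → R → R/I → 0`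
with all `d_{i,j} ≤ m + i`, and `reg (R/I)` is the least such `m` (this agrees with the
definition via a minimal resolution, since the minimal resolution is a direct summand of
any graded free resolution).
-/

open MvPolynomial

variable {k : Type} [Field k] {n : ℕ}

/-- A graded free resolution of `R/I`, encoded by matrices of homogeneous polynomials:
`F i = ⊕_{j : Fin (b i)} R(- D i j)`, with `F 0 = R` (so `b 0 = 1`, `D 0 = 0`);
the map `F (i+1) → F i` is given by the matrix `A i`, whose `(j,j')` entry is
homogeneous of degree `D (i+1) j' - D i j`; the complex is exact in positive degrees
and the image of `F 1 → F 0 = R` is `I`, so that the cokernel of the augmented complex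
is `R/I`. -/
structure GradedFreeResolution (I : Ideal (MvPolynomial (Fin (n + 1)) k)) where
  b : ℕ → ℕ
  hb0 : b 0 = 1
  D : (i : ℕ) → Fin (b i) → ℕ
  hD0 : ∀ j, D 0 j = 0
  A : (i : ℕ) → Matrix (Fin (b i)) (Fin (b (i + 1))) (MvPolynomial (Fin (n + 1)) k)
  homog : ∀ i (j : Fin (b i)) (j' : Fin (b (i + 1))),
    A i j j' = 0 ∨ (D i j ≤ D (i + 1) j' ∧ (A i j j').IsHomogeneous (D (i + 1) j' - D i j))
  exact : ∀ i, LinearMap.range ((A (i + 1)).mulVecLin) = LinearMap.ker ((A i).mulVecLin)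
  augment : Submodule.map
      (LinearMap.proj (R := MvPolynomial (Fin (n + 1)) k)
        (φ := fun _ : Fin (b 0) => MvPolynomial (Fin (n + 1)) k)
        ⟨0, hb0 ▸ Nat.zero_lt_one⟩)
      (LinearMap.range ((A 0).mulVecLin)) = I

/-- `reg R/I ≤ m` iff some graded free resolution of `R/I` has all twists `d_{i,j} ≤ m + i`. -/
def regQuotLE (I : Ideal (MvPolynomial (Fin (n + 1)) k)) (m : ℤ) : Prop :=
  ∃ F : GradedFreeResolution I, ∀ (i : ℕ) (j : Fin (F.b i)), (F.D i j : ℤ) ≤ m + i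

/-- The Castelnuovo–Mumford regularity of `R/I`. -/
noncomputable def regQuot (I : Ideal (MvPolynomial (Fin (n + 1)) k)) : ℤ :=
  sInf {m : ℤ | regQuotLE I m}

/-!
The Koszul complex of the regular sequence `h`, with its first map scaled by the nonzerodivisor
`l`, is a graded free resolution `0 → R(-δ-3e) → R(-δ-2e)³ → R(-δ-e)³ → R` of `(l)·(h)`
(`δ = deg l`, `e = deg hᵢ`), whence `reg ≤ δ + 3e - 3`. For the converse, take any graded
resolution `F`: graded chain maps `F → G` and `G → F` lifting the identity of `R` compose to an
endomorphism of `G` homotopic to the identity. If all twists of `F₃` were below `δ + 3e`, the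
graded map `F₃ → G₃ = R(-δ-3e)` would vanish, so the identity of `G₃` would factor through the
last Koszul map, whose entries have no constant term.
-/

open Matrix RingTheory.Sequence

theorem Matrix.exists_mul_eq_of_forall_mem_range {ι κ μ α : Type*} [CommSemiring α] [Fintype κ]
    {B : Matrix ι κ α} {X : Matrix ι μ α}
    (hXB : ∀ j, X.col j ∈ LinearMap.range B.mulVecLin) : ∃ C, B * C = X := by
  choose v hv using hXB
  exact ⟨Matrix.of fun k j => v j k, Matrix.ext fun i j => congrFun (hv j) i⟩

theorem Matrix.range_mulVecLin_le_ker_of_mul_eq_zero {ι κ μ α : Type*} [CommSemiring α]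
    [Fintype κ] [Fintype μ] {A : Matrix ι κ α} {B : Matrix κ μ α} (hAB : A * B = 0) :
    LinearMap.range B.mulVecLin ≤ LinearMap.ker A.mulVecLin :=
  LinearMap.range_le_ker_iff.mpr (by rw [← Matrix.mulVecLin_mul, hAB, Matrix.mulVecLin_zero])

theorem Matrix.ker_mulVecLin_smul {ι κ α : Type*} [CommRing α] [IsDomain α] [Fintype κ]
    (B : Matrix ι κ α) {l : α} (hl : l ≠ 0) :
    LinearMap.ker (l • B).mulVecLin = LinearMap.ker B.mulVecLin := by
  ext v
  simp [hl]

theorem Matrix.mul_left_cancel_of_ker_mulVecLin_eq_bot {ι κ μ α : Type*} [CommRing α]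
    [Fintype κ] {B : Matrix ι κ α} (hB : LinearMap.ker B.mulVecLin = ⊥)
    {X Y : Matrix κ μ α} (h : B * X = B * Y) : X = Y := by
  ext i j
  have hcol : B.mulVecLin (X.col j) = B.mulVecLin (Y.col j) :=
    funext fun s => congrFun (congrFun h s) j
  exact congrFun (LinearMap.ker_eq_bot.mp hB hcol) i

theorem Matrix.mul_mul_eq_zero_of_mul_eq {ι κ μ μ' ν α : Type*} [CommSemiring α] [Fintype κ]
    [Fintype μ] [Fintype μ'] {A : Matrix ι κ α} {Ψ : Matrix κ μ α} {Z : Matrix ι μ' α}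
    {B : Matrix μ' μ α} {B' : Matrix μ ν α} (h : A * Ψ = Z * B) (hB : B * B' = 0) :
    A * (Ψ * B') = 0 := by
  rw [← Matrix.mul_assoc, h, Matrix.mul_assoc, hB, Matrix.mul_zero]

section GradedMatrix

variable {σ R ι κ μ : Type*} [CommSemiring R]

attribute [local instance] MvPolynomial.gradedAlgebra in
theorem MvPolynomial.homogeneousComponent_mul_of_isHomogeneous {p : MvPolynomial σ R} {δ : ℕ}
    (hp : p.IsHomogeneous δ) (q : MvPolynomial σ R) (m : ℕ) :
    homogeneousComponent m (p * q) = if δ ≤ m then p * homogeneousComponent (m - δ) q else 0 := by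
  have := DirectSum.coe_decompose_mul_of_left_mem (homogeneousSubmodule σ R) (b := q) m
    ((mem_homogeneousSubmodule δ p).mpr hp)
  simpa only [DirectSum.decompose, Equiv.coe_fn_mk, decomposition.decompose'_apply] using this

/-- `v` is homogeneous of degree `d` as an element of the twisted free module `⊕ᵢ R(-a i)`. -/
def IsHomogeneousVec (a : ι → ℕ) (d : ℕ) (v : ι → MvPolynomial σ R) : Prop :=
  ∀ i, v i = 0 ∨ a i ≤ d ∧ (v i).IsHomogeneous (d - a i)

/-- `B` is a degree-preserving map `⊕ⱼ R(-c j) → ⊕ᵢ R(-a i)`. -/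
def IsGradedMatrix (B : Matrix ι κ (MvPolynomial σ R)) (a : ι → ℕ) (c : κ → ℕ) : Prop :=
  ∀ i j, B i j = 0 ∨ a i ≤ c j ∧ (B i j).IsHomogeneous (c j - a i)

theorem isGradedMatrix_of_forall_isHomogeneous {B : Matrix ι κ (MvPolynomial σ R)} {a c m : ℕ}
    (hB : ∀ i j, (B i j).IsHomogeneous m) (hac : a + m = c) :
    IsGradedMatrix B (fun _ => a) (fun _ => c) :=
  fun i j => Or.inr ⟨by dsimp only; omega, by simpa [← hac] using hB i j⟩

noncomputable def homogeneousComponentVec (a : ι → ℕ) (d : ℕ) (v : ι → MvPolynomial σ R) :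
    ι → MvPolynomial σ R :=
  fun i => if a i ≤ d then homogeneousComponent (d - a i) (v i) else 0

theorem isHomogeneousVec_homogeneousComponentVec (a : ι → ℕ) (d : ℕ)
    (v : ι → MvPolynomial σ R) : IsHomogeneousVec a d (homogeneousComponentVec a d v) := by
  intro i
  by_cases h : a i ≤ d
  · exact Or.inr ⟨h, by simpa [homogeneousComponentVec, h] using
      homogeneousComponent_isHomogeneous _ _⟩
  · exact Or.inl (if_neg h)

theorem IsHomogeneousVec.homogeneousComponentVec_eq {a : ι → ℕ} {d : ℕ}
    {v : ι → MvPolynomial σ R} (hv : IsHomogeneousVec a d v) :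
    homogeneousComponentVec a d v = v := by
  funext i
  rcases hv i with h0 | ⟨hle, hhom⟩
  · simp [homogeneousComponentVec, h0]
  · simp [homogeneousComponentVec, hle, homogeneousComponent_of_mem hhom]

namespace IsGradedMatrix

variable {B : Matrix ι κ (MvPolynomial σ R)} {a : ι → ℕ} {c : κ → ℕ}

theorem apply_eq_zero_of_lt (hB : IsGradedMatrix B a c) {i : ι} {j : κ} (h : c j < a i) :
    B i j = 0 :=
  (hB i j).resolve_right fun h' => by omega

theorem constantCoeff_apply_eq_zero (hB : IsGradedMatrix B a c) {i : ι} {j : κ}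
    (h : a i < c j) : constantCoeff (B i j) = 0 := by
  rcases hB i j with h0 | ⟨-, hhom⟩
  · rw [h0, map_zero]
  · rw [constantCoeff_eq]
    exact hhom.coeff_eq_zero (by simp; omega)

variable [Fintype κ]

theorem isHomogeneousVec_mulVec (hB : IsGradedMatrix B a c) {d : ℕ}
    {v : κ → MvPolynomial σ R} (hv : IsHomogeneousVec c d v) : IsHomogeneousVec a d (B *ᵥ v) := by
  intro i
  by_cases had : a i ≤ d
  · refine Or.inr ⟨had, (mem_homogeneousSubmodule _ _).mp (Submodule.sum_mem _ fun j _ => ?_)⟩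
    rcases hB i j with h0 | ⟨hac, hBh⟩
    · simp [h0]
    rcases hv j with h0 | ⟨hcd, hvh⟩
    · simp [h0]
    have := hBh.mul hvh
    rwa [show c j - a i + (d - c j) = d - a i by omega] at this
  · refine Or.inl (Finset.sum_eq_zero fun j _ => ?_)
    rcases hB i j with h0 | ⟨hac, -⟩
    · simp [h0]
    rcases hv j with h0 | ⟨hcd, -⟩
    · simp [h0]
    omega

theorem mul (hB : IsGradedMatrix B a c) {d : μ → ℕ} {C : Matrix κ μ (MvPolynomial σ R)}
    (hC : IsGradedMatrix C c d) : IsGradedMatrix (B * C) a d :=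
  fun i j => hB.isHomogeneousVec_mulVec (fun k => hC k j) i

theorem mulVec_homogeneousComponentVec (hB : IsGradedMatrix B a c) (d : ℕ)
    (v : κ → MvPolynomial σ R) :
    B *ᵥ homogeneousComponentVec c d v = homogeneousComponentVec a d (B *ᵥ v) := by
  funext i
  simp only [mulVec, dotProduct, homogeneousComponentVec]
  split_ifs with had
  · rw [map_sum]
    refine Finset.sum_congr rfl fun j _ => ?_
    rcases hB i j with h0 | ⟨hac, hBh⟩
    · simp [h0]
    rw [homogeneousComponent_mul_of_isHomogeneous hBh]
    by_cases hcd : c j ≤ d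
    · rw [if_pos hcd, if_pos (by omega), show d - a i - (c j - a i) = d - c j by omega]
    · rw [if_neg hcd, if_neg (by omega), mul_zero]
  · refine Finset.sum_eq_zero fun j _ => ?_
    rcases hB i j with h0 | ⟨hac, -⟩
    · simp [h0]
    · rw [if_neg (by omega), mul_zero]

theorem exists_isHomogeneousVec_mulVec_eq (hB : IsGradedMatrix B a c) {d : ℕ}
    {w : ι → MvPolynomial σ R} (hw : IsHomogeneousVec a d w)
    (hmem : w ∈ LinearMap.range B.mulVecLin) :
    ∃ v, IsHomogeneousVec c d v ∧ B *ᵥ v = w := by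
  obtain ⟨u, rfl⟩ := hmem
  rw [mulVecLin_apply] at hw ⊢
  exact ⟨homogeneousComponentVec c d u, isHomogeneousVec_homogeneousComponentVec c d u,
    by rw [hB.mulVec_homogeneousComponentVec, hw.homogeneousComponentVec_eq]⟩

theorem exists_mul_eq (hB : IsGradedMatrix B a c) {d : μ → ℕ}
    {X : Matrix ι μ (MvPolynomial σ R)} (hX : IsGradedMatrix X a d)
    (hXB : ∀ j, X.col j ∈ LinearMap.range B.mulVecLin) :
    ∃ C, B * C = X ∧ IsGradedMatrix C c d := by
  choose v hv hBv using fun j => hB.exists_isHomogeneousVec_mulVec_eq (fun i => hX i j) (hXB j)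
  exact ⟨Matrix.of fun k j => v j k, Matrix.ext fun i j => congrFun (hBv j) i,
    fun k j => hv j k⟩

end IsGradedMatrix

end GradedMatrix

section Koszul

variable {R : Type*} [CommRing R]

theorem RingTheory.Sequence.IsWeaklyRegular.mem_ofList_take_of_mul_mem {rs : List R}
    (hrs : IsWeaklyRegular R rs) {i : ℕ} (hi : i < rs.length) {x : R}
    (hx : rs[i] * x ∈ Ideal.ofList (rs.take i)) : x ∈ Ideal.ofList (rs.take i) := by
  have htop : Ideal.ofList (rs.take i) • (⊤ : Submodule R R) = Ideal.ofList (rs.take i) := by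
    rw [Ideal.smul_eq_mul, Ideal.mul_top]
  rw [← htop] at hx ⊢
  exact mem_of_isSMulRegular_quotient_of_smul_mem (hrs.regular_mod_prev i hi) hx

theorem RingTheory.Sequence.IsWeaklyRegular.regular_mod_prev_fin_three {h : Fin 3 → R}
    (hreg : IsWeaklyRegular R (List.ofFn h)) :
    (∀ x, h 0 * x = 0 → x = 0) ∧
      (∀ x, h 1 * x ∈ Ideal.span {h 0} → x ∈ Ideal.span {h 0}) ∧
      (∀ x, h 2 * x ∈ Ideal.span {h 0} ⊔ Ideal.span {h 1} →
        x ∈ Ideal.span {h 0} ⊔ Ideal.span {h 1}) := by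
  refine ⟨fun x hx => ?_, fun x hx => ?_, fun x hx => ?_⟩
  · simpa using hreg.mem_ofList_take_of_mul_mem (i := 0) (by simp) (x := x) (by simpa using hx)
  · simpa using hreg.mem_ofList_take_of_mul_mem (i := 1) (by simp) (x := x) (by simpa using hx)
  · simpa using hreg.mem_ofList_take_of_mul_mem (i := 2) (by simp) (x := x) (by simpa using hx)

variable (h : Fin 3 → R)

def koszul₁ : Matrix (Fin 1) (Fin 3) R := !![h 0, h 1, h 2]

def koszul₂ : Matrix (Fin 3) (Fin 3) R := !![-h 1, -h 2, 0; h 0, 0, -h 2; 0, h 0, h 1]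

def koszul₃ : Matrix (Fin 3) (Fin 1) R := !![h 2; -h 1; h 0]

theorem koszul₁_mul_koszul₂ : koszul₁ h * koszul₂ h = 0 := by
  ext i j
  fin_cases i; fin_cases j <;> simp [koszul₁, koszul₂] <;> ring

theorem koszul₂_mul_koszul₃ : koszul₂ h * koszul₃ h = 0 := by
  ext i j
  fin_cases i <;> fin_cases j <;> simp [koszul₂, koszul₃] <;> ring

variable {h} (hreg : IsWeaklyRegular R (List.ofFn h))
include hreg

theorem ker_koszul₃ : LinearMap.ker (koszul₃ h).mulVecLin = ⊥ := by
  obtain ⟨reg₀, -, -⟩ := hreg.regular_mod_prev_fin_three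
  refine eq_bot_iff.mpr fun t ht => ?_
  have e : h 0 * t 0 = 0 := by simpa [koszul₃, vecHead] using congrFun (LinearMap.mem_ker.mp ht) 2
  ext i
  fin_cases i
  exact reg₀ _ e

theorem range_koszul₃ :
    LinearMap.range (koszul₃ h).mulVecLin = LinearMap.ker (koszul₂ h).mulVecLin := by
  obtain ⟨reg₀, reg₁, -⟩ := hreg.regular_mod_prev_fin_three
  refine le_antisymm (Matrix.range_mulVecLin_le_ker_of_mul_eq_zero (koszul₂_mul_koszul₃ h))
    fun u hu => ?_
  obtain ⟨-, e₁, e₂⟩ : -(h 1 * u 0) + -(h 2 * u 1) = 0 ∧ h 0 * u 0 + -(h 2 * u 2) = 0 ∧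
      h 0 * u 1 + h 1 * u 2 = 0 := by
    simpa [koszul₂, funext_iff, Fin.forall_fin_succ, vecHead, vecTail] using hu
  obtain ⟨t, ht⟩ := Ideal.mem_span_singleton'.mp
    (reg₁ (u 2) (Ideal.mem_span_singleton'.mpr ⟨-u 1, by linear_combination -e₂⟩))
  refine ⟨![t], ?_⟩
  ext i
  fin_cases i <;> simp [koszul₃]
  · linear_combination -reg₀ (u 0 - t * h 2) (by linear_combination e₁ - h 2 * ht)
  · linear_combination -reg₀ (u 1 + t * h 1) (by linear_combination e₂ + h 1 * ht)
  · linear_combination ht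

theorem range_koszul₂ :
    LinearMap.range (koszul₂ h).mulVecLin = LinearMap.ker (koszul₁ h).mulVecLin := by
  obtain ⟨reg₀, reg₁, reg₂⟩ := hreg.regular_mod_prev_fin_three
  refine le_antisymm (Matrix.range_mulVecLin_le_ker_of_mul_eq_zero (koszul₁_mul_koszul₂ h))
    fun v hv => ?_
  have e : h 0 * v 0 + (h 1 * v 1 + h 2 * v 2) = 0 := by
    simpa [koszul₁, funext_iff, Fin.forall_fin_succ, vecHead, vecTail] using hv
  obtain ⟨a, b, hb, hab⟩ := Ideal.mem_span_singleton_sup.mp (reg₂ (v 2)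
    (Ideal.mem_span_singleton_sup.mpr ⟨-v 0, h 1 * -v 1, Ideal.mul_mem_right _ _
      (Ideal.mem_span_singleton_self _), by linear_combination -e⟩))
  obtain ⟨b, rfl⟩ := Ideal.mem_span_singleton'.mp hb
  obtain ⟨w, hw⟩ := Ideal.mem_span_singleton'.mp (reg₁ (v 1 + b * h 2)
    (Ideal.mem_span_singleton'.mpr ⟨-(v 0 + a * h 2), by linear_combination -e - h 2 * hab⟩))
  refine ⟨![w, a, b], ?_⟩
  ext i
  fin_cases i <;> simp [koszul₂]
  · linear_combination -reg₀ (v 0 + w * h 1 + a * h 2)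
      (by linear_combination e + h 1 * hw + h 2 * hab)
  · linear_combination hw
  · linear_combination hab

end Koszul

section KoszulHomogeneity

variable {σ R : Type*} [CommRing R] {e : ℕ} {h : Fin 3 → MvPolynomial σ R}
  (hh : ∀ i, (h i).IsHomogeneous e)
include hh

theorem isHomogeneous_smul_koszul₁_apply {δ : ℕ} {l : MvPolynomial σ R}
    (hl : l.IsHomogeneous δ) (i j) : ((l • koszul₁ h) i j).IsHomogeneous (δ + e) := by
  fin_cases i; fin_cases j <;> simpa [koszul₁] using hl.mul (hh _)

theorem isHomogeneous_koszul₂_apply (i j) : (koszul₂ h i j).IsHomogeneous e := by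
  fin_cases i <;> fin_cases j <;> simp [koszul₂, hh, (hh _).neg, isHomogeneous_zero]

theorem isHomogeneous_koszul₃_apply (i j) : (koszul₃ h i j).IsHomogeneous e := by
  fin_cases i <;> fin_cases j <;> simp [koszul₃, hh, (hh _).neg]

end KoszulHomogeneity

section KoszulResolution

def koszulRank : ℕ → ℕ
  | 0 => 1
  | 1 => 3
  | 2 => 3
  | 3 => 1
  | _ + 4 => 0

/-- The twist of every summand of the `i`-th module of the Koszul resolution of `(l) * (h)`,
with `l` of degree `δ` and the `h i` of degree `e`. -/
def koszulTwist (δ e i : ℕ) : ℕ :=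
  if i = 0 then 0 else δ + i * e

variable {δ e : ℕ} {l : MvPolynomial (Fin (n + 1)) k} {h : Fin 3 → MvPolynomial (Fin (n + 1)) k}

variable (l h) in
noncomputable def koszulMatrix :
    (i : ℕ) → Matrix (Fin (koszulRank i)) (Fin (koszulRank (i + 1))) (MvPolynomial (Fin (n + 1)) k)
  | 0 => l • koszul₁ h
  | 1 => koszul₂ h
  | 2 => koszul₃ h
  | _ + 3 => 0

theorem isGradedMatrix_koszulMatrix (hl : l.IsHomogeneous δ) (hh : ∀ i, (h i).IsHomogeneous e) :
    ∀ i, IsGradedMatrix (koszulMatrix l h i) (fun _ => koszulTwist δ e i)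
      (fun _ => koszulTwist δ e (i + 1))
  | 0 => isGradedMatrix_of_forall_isHomogeneous (isHomogeneous_smul_koszul₁_apply hh hl)
      (by simp [koszulTwist])
  | 1 => isGradedMatrix_of_forall_isHomogeneous (isHomogeneous_koszul₂_apply hh)
      (by simp [koszulTwist]; ring)
  | 2 => isGradedMatrix_of_forall_isHomogeneous (isHomogeneous_koszul₃_apply hh)
      (by simp [koszulTwist]; ring)
  | _ + 3 => fun _ _ => Or.inl rfl

theorem range_koszulMatrix_succ (hl0 : l ≠ 0)
    (hreg : IsWeaklyRegular (MvPolynomial (Fin (n + 1)) k) (List.ofFn h)) :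
    ∀ i, LinearMap.range (koszulMatrix l h (i + 1)).mulVecLin =
      LinearMap.ker (koszulMatrix l h i).mulVecLin
  | 0 => (range_koszul₂ hreg).trans (Matrix.ker_mulVecLin_smul _ hl0).symm
  | 1 => range_koszul₃ hreg
  | 2 => (LinearMap.range_eq_bot.mpr Matrix.mulVecLin_zero).trans (ker_koszul₃ hreg).symm
  | i + 3 =>
    have : IsEmpty (Fin (koszulRank (i + 4))) := Fin.isEmpty'
    Subsingleton.elim _ _

theorem map_proj_range_smul_koszul₁ :
    Submodule.map (LinearMap.proj 0) (LinearMap.range (l • koszul₁ h).mulVecLin) =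
      Ideal.span {l} * Ideal.span (Set.range h) := by
  ext x
  simp only [Submodule.mem_map, LinearMap.mem_range, Ideal.mem_span_singleton_mul,
    Ideal.mem_span_range_iff_exists_fun]
  constructor
  · rintro ⟨_, ⟨c, rfl⟩, rfl⟩
    exact ⟨_, ⟨c, rfl⟩, by simp [koszul₁, Fin.sum_univ_three, vecHead, vecTail]; ring⟩
  · rintro ⟨_, ⟨c, rfl⟩, rfl⟩
    exact ⟨_, ⟨c, rfl⟩, by simp [koszul₁, Fin.sum_univ_three, vecHead, vecTail]; ring⟩

variable (δ e) in
noncomputable def koszulResolution (hl : l.IsHomogeneous δ) (hl0 : l ≠ 0)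
    (hh : ∀ i, (h i).IsHomogeneous e)
    (hreg : IsWeaklyRegular (MvPolynomial (Fin (n + 1)) k) (List.ofFn h)) :
    GradedFreeResolution (Ideal.span {l} * Ideal.span (Set.range h)) where
  b := koszulRank
  hb0 := rfl
  D i _ := koszulTwist δ e i
  hD0 _ := rfl
  A := koszulMatrix l h
  homog := isGradedMatrix_koszulMatrix hl hh
  exact := range_koszulMatrix_succ hl0 hreg
  augment := map_proj_range_smul_koszul₁

theorem regQuotLE_span_mul_span (hl : l.IsHomogeneous δ) (hl0 : l ≠ 0)
    (hh : ∀ i, (h i).IsHomogeneous e)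
    (hreg : IsWeaklyRegular (MvPolynomial (Fin (n + 1)) k) (List.ofFn h)) (he : 1 ≤ e) :
    regQuotLE (Ideal.span {l} * Ideal.span (Set.range h)) (δ + 3 * e - 3) :=
  ⟨koszulResolution δ e hl hl0 hh hreg, fun
    | 0, _ | 1, _ | 2, _ | 3, _ => by simp [koszulResolution, koszulTwist] <;> omega
    | _ + 4, j => j.elim0⟩

end KoszulResolution

namespace GradedFreeResolution

variable {I : Ideal (MvPolynomial (Fin (n + 1)) k)} (F G : GradedFreeResolution I)
  {κ : Type*}

theorem isGradedMatrix_A (i : ℕ) : IsGradedMatrix (F.A i) (F.D i) (F.D (i + 1)) :=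
  F.homog i

theorem subsingleton_fin_b_zero : Subsingleton (Fin (F.b 0)) := by
  rw [F.hb0]
  infer_instance

theorem A_mul_A_succ (i : ℕ) : F.A i * F.A (i + 1) = 0 :=
  Matrix.ext_iff_mulVec.mpr fun v => by
    rw [← Matrix.mulVec_mulVec, Matrix.zero_mulVec]
    exact LinearMap.mem_ker.mp ((F.exact i).le ⟨v, rfl⟩)

theorem ker_A_eq_bot {i : ℕ} (hb : F.b (i + 2) = 0) : LinearMap.ker (F.A i).mulVecLin = ⊥ := by
  have : IsEmpty (Fin (F.b (i + 1 + 1))) := hb ▸ Fin.isEmpty'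
  rw [← F.exact i, Subsingleton.elim (F.A (i + 1)).mulVecLin 0, LinearMap.range_zero]

theorem A_zero_mem (s : Fin (F.b 0)) (t : Fin (F.b 1)) : F.A 0 s t ∈ I := by
  have := F.subsingleton_fin_b_zero
  have hmem := F.augment ▸
    Submodule.mem_map_of_mem (⟨Pi.single t 1, by
      rw [Matrix.mulVecLin_apply, Matrix.mulVec_single_one]⟩ :
      (F.A 0).col t ∈ LinearMap.range (F.A 0).mulVecLin)
  rwa [Subsingleton.elim s]

theorem mem_range_A_zero {v : Fin (F.b 0) → MvPolynomial (Fin (n + 1)) k} (hv : ∀ s, v s ∈ I) :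
    v ∈ LinearMap.range (F.A 0).mulVecLin := by
  have := F.subsingleton_fin_b_zero
  obtain ⟨w, hw, hwv⟩ : v ⟨0, F.hb0 ▸ Nat.zero_lt_one⟩ ∈ Submodule.map (LinearMap.proj _)
      (LinearMap.range (F.A 0).mulVecLin) := by
    rw [F.augment]
    exact hv _
  have hvw : v = w := funext fun s => by
    rw [Subsingleton.elim s ⟨0, F.hb0 ▸ Nat.zero_lt_one⟩]
    exact hwv.symm
  exact hvw ▸ hw

theorem col_mem_range_A_succ {i : ℕ}
    {X : Matrix (Fin (F.b (i + 1))) κ (MvPolynomial (Fin (n + 1)) k)}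
    (hX : F.A i * X = 0) (t : κ) : X.col t ∈ LinearMap.range (F.A (i + 1)).mulVecLin :=
  (F.exact i).ge (funext fun s => congrFun (congrFun hX s) t)

theorem exists_A_succ_mul_eq [Fintype κ] {i : ℕ}
    {X : Matrix (Fin (F.b (i + 1))) κ (MvPolynomial (Fin (n + 1)) k)} (hX : F.A i * X = 0) :
    ∃ C : Matrix (Fin (F.b (i + 2))) κ (MvPolynomial (Fin (n + 1)) k), F.A (i + 1) * C = X :=
  Matrix.exists_mul_eq_of_forall_mem_range (F.col_mem_range_A_succ hX)

noncomputable def zeroComparison :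
    Matrix (Fin (G.b 0)) (Fin (F.b 0)) (MvPolynomial (Fin (n + 1)) k) :=
  Matrix.of fun _ _ => 1

theorem zeroComparison_mul_zeroComparison : F.zeroComparison G * G.zeroComparison F = 1 := by
  ext s t
  have := G.subsingleton_fin_b_zero
  rw [Subsingleton.elim s t]
  simp [zeroComparison, Matrix.mul_apply, F.hb0]

theorem isGradedMatrix_zeroComparison : IsGradedMatrix (F.zeroComparison G) (G.D 0) (F.D 0) :=
  fun s t => Or.inr ⟨by simp [G.hD0], by simpa [zeroComparison, F.hD0] using isHomogeneous_one _ _⟩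

theorem zeroComparison_mul_A_zero_mem (s : Fin (G.b 0)) (t : Fin (F.b 1)) :
    (F.zeroComparison G * F.A 0) s t ∈ I := by
  simpa [zeroComparison, Matrix.mul_apply] using Ideal.sum_mem _ fun u _ => F.A_zero_mem u t

theorem exists_chainMap :
    ∃ (Ψ₁ : Matrix (Fin (G.b 1)) (Fin (F.b 1)) (MvPolynomial (Fin (n + 1)) k))
      (Ψ₂ : Matrix (Fin (G.b 2)) (Fin (F.b 2)) (MvPolynomial (Fin (n + 1)) k))
      (Ψ₃ : Matrix (Fin (G.b 3)) (Fin (F.b 3)) (MvPolynomial (Fin (n + 1)) k)),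
      G.A 0 * Ψ₁ = F.zeroComparison G * F.A 0 ∧ G.A 1 * Ψ₂ = Ψ₁ * F.A 1 ∧
        G.A 2 * Ψ₃ = Ψ₂ * F.A 2 ∧ IsGradedMatrix Ψ₃ (G.D 3) (F.D 3) := by
  obtain ⟨Ψ₁, hΨ₁, gΨ₁⟩ := (G.isGradedMatrix_A 0).exists_mul_eq
    ((F.isGradedMatrix_zeroComparison G).mul (F.isGradedMatrix_A 0))
    fun t => G.mem_range_A_zero fun s => F.zeroComparison_mul_A_zero_mem G s t
  obtain ⟨Ψ₂, hΨ₂, gΨ₂⟩ := (G.isGradedMatrix_A 1).exists_mul_eq (gΨ₁.mul (F.isGradedMatrix_A 1))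
    (G.col_mem_range_A_succ (Matrix.mul_mul_eq_zero_of_mul_eq hΨ₁ (F.A_mul_A_succ 0)))
  obtain ⟨Ψ₃, hΨ₃, gΨ₃⟩ := (G.isGradedMatrix_A 2).exists_mul_eq (gΨ₂.mul (F.isGradedMatrix_A 2))
    (G.col_mem_range_A_succ (Matrix.mul_mul_eq_zero_of_mul_eq hΨ₂ (F.A_mul_A_succ 1)))
  exact ⟨Ψ₁, Ψ₂, Ψ₃, hΨ₁, hΨ₂, hΨ₃, gΨ₃⟩

theorem exists_mul_A_two_eq_sub_one (hG : LinearMap.ker (G.A 2).mulVecLin = ⊥)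
    {χ₁ : Matrix (Fin (G.b 1)) (Fin (G.b 1)) (MvPolynomial (Fin (n + 1)) k)}
    {χ₂ : Matrix (Fin (G.b 2)) (Fin (G.b 2)) (MvPolynomial (Fin (n + 1)) k)}
    {χ₃ : Matrix (Fin (G.b 3)) (Fin (G.b 3)) (MvPolynomial (Fin (n + 1)) k)}
    (h₁ : G.A 0 * χ₁ = G.A 0) (h₂ : G.A 1 * χ₂ = χ₁ * G.A 1) (h₃ : G.A 2 * χ₃ = χ₂ * G.A 2) :
    ∃ H : Matrix (Fin (G.b 3)) (Fin (G.b 2)) (MvPolynomial (Fin (n + 1)) k),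
      H * G.A 2 = χ₃ - 1 := by
  obtain ⟨H₁, hH₁⟩ := G.exists_A_succ_mul_eq (i := 0) (X := χ₁ - 1) (by
    rw [Matrix.mul_sub, h₁, Matrix.mul_one, sub_self])
  obtain ⟨H₂, hH₂⟩ := G.exists_A_succ_mul_eq (i := 1) (X := χ₂ - 1 - H₁ * G.A 1) (by
    rw [Matrix.mul_sub, Matrix.mul_sub, h₂, ← Matrix.mul_assoc, hH₁, Matrix.sub_mul,
      Matrix.mul_one, Matrix.one_mul, sub_self])
  refine ⟨H₂, Matrix.mul_left_cancel_of_ker_mulVecLin_eq_bot hG ?_⟩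
  rw [← Matrix.mul_assoc, hH₂, Matrix.sub_mul, Matrix.sub_mul, Matrix.mul_assoc H₁,
    G.A_mul_A_succ 1, Matrix.mul_zero, sub_zero, ← h₃, Matrix.mul_sub, Matrix.mul_one,
    Matrix.one_mul]

theorem exists_le_D_three (hG : G.b 4 = 0) {j' : Fin (G.b 3)} (hj' : ∀ s, G.D 2 s < G.D 3 j') :
    ∃ j, G.D 3 j' ≤ F.D 3 j := by
  by_contra! hlt
  obtain ⟨Ψ₁, Ψ₂, Ψ₃, hΨ₁, hΨ₂, hΨ₃, gΨ₃⟩ := F.exists_chainMap G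
  obtain ⟨Φ₁, Φ₂, Φ₃, hΦ₁, hΦ₂, hΦ₃, -⟩ := G.exists_chainMap F
  obtain ⟨H, hH⟩ := G.exists_mul_A_two_eq_sub_one (G.ker_A_eq_bot hG)
    (χ₁ := Ψ₁ * Φ₁) (χ₂ := Ψ₂ * Φ₂) (χ₃ := Ψ₃ * Φ₃)
    (by rw [← Matrix.mul_assoc, hΨ₁, Matrix.mul_assoc, hΦ₁, ← Matrix.mul_assoc,
      zeroComparison_mul_zeroComparison, Matrix.one_mul])
    (by rw [← Matrix.mul_assoc, hΨ₂, Matrix.mul_assoc, hΦ₂, Matrix.mul_assoc])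
    (by rw [← Matrix.mul_assoc, hΨ₃, Matrix.mul_assoc, hΦ₃, Matrix.mul_assoc])
  -- Row `j'` of `Ψ₃` vanishes for degree reasons, so the `(j', j')` entry of `H * G.A 2` is `-1`,
  -- although no entry of column `j'` of `G.A 2` has a constant term.
  have hentry := congrArg constantCoeff (congrFun (congrFun hH j') j')
  simp [Matrix.mul_apply, gΨ₃.apply_eq_zero_of_lt (hlt _),
    (G.isGradedMatrix_A 2).constantCoeff_apply_eq_zero (hj' _)] at hentry

end GradedFreeResolution

theorem regQuot_span_mul_span {δ e : ℕ} {l : MvPolynomial (Fin (n + 1)) k}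
    {h : Fin 3 → MvPolynomial (Fin (n + 1)) k} (hl : l.IsHomogeneous δ) (hl0 : l ≠ 0)
    (hh : ∀ i, (h i).IsHomogeneous e)
    (hreg : IsWeaklyRegular (MvPolynomial (Fin (n + 1)) k) (List.ofFn h)) (he : 1 ≤ e) :
    regQuot (Ideal.span {l} * Ideal.span (Set.range h)) = δ + 3 * e - 3 := by
  refine IsLeast.csInf_eq ⟨regQuotLE_span_mul_span hl hl0 hh hreg he, fun m ⟨F, hF⟩ => ?_⟩
  obtain ⟨j, hj⟩ :=
    F.exists_le_D_three (koszulResolution δ e hl hl0 hh hreg) rfl (j' := (0 : Fin 1))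
    fun _ => by simp [koszulResolution, koszulTwist]; omega
  have hFj := hF 3 j
  simp [koszulResolution, koszulTwist] at hj
  omega

/-- Let `R = k[x₀,x₁,x₂]` and `I = l·H`, where `l` is a (nonzero) linear
form and `H` is generated by a regular sequence of `3` forms each of degree `d₁ - 1`
(with `d₁ ≥ 2`). Then `reg (R/I) = 3 d₁ - 5`. -/
theorem reg_of_linear_times_complete_intersection
    (d₁ : ℕ) (hd₁ : 2 ≤ d₁)
    (l : MvPolynomial (Fin 3) k) (hl : l.IsHomogeneous 1) (hl0 : l ≠ 0)
    (h : Fin 3 → MvPolynomial (Fin 3) k)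
    (hh : ∀ i, (h i).IsHomogeneous (d₁ - 1))
    (hreg : RingTheory.Sequence.IsRegular (MvPolynomial (Fin 3) k) (List.ofFn h))
    (H I : Ideal (MvPolynomial (Fin 3) k))
    (hH : H = Ideal.span (Set.range h))
    (hI : I = Ideal.span {l} * H) :
    regQuot (n := 2) I = 3 * (d₁ : ℤ) - 5 := by
  subst hI hH
  rw [regQuot_span_mul_span hl hl0 hh hreg.toIsWeaklyRegular (by omega)]
  omega
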